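/- arXiv:2305.17572 — 3 statements merged into one kernel-verified Lean document; each statement's English description precedes it below -/
import Mathlib

section
/- L'Hospital's rule for regulated functions (0/0 case): Let f, g be regulated on (a,b), α strictly increasing, with D_α f and D_α g existing everywhere on (a,b), D_α g of constant sign on (a,b), lim_{x↑b} (D_α f)(x)/(D_α g)(x) = A (with A ∈ [-∞,∞]), and lim_{x↑b} f^-(x) = lim_{x↑b} g^-(x) = 0. Then lim_{x↑b} f^-(x)/g^-(x) = A. -/
/-!
If `D_α u > 0` on an interval, then `u⁺(x - t) < u⁻(x + t)` for all small `t > 0`, and a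
continuous induction turns this local information into strict monotonicity of `u⁻`; if moreover
`u⁻ → 0` at `b`, then `u⁻ < 0`. Suppose `D_α g > 0`. For `p < A`, near `b` the function
`u = f - p g` has `D_α u = D_α f - p D_α g > 0`, so `f⁻ < p g⁻`, and `g⁻ < 0` by the same
argument applied to `g`; hence `f⁻ / g⁻ > p`. The upper bound is the lower bound for `-f`, and the
case `D_α g < 0` reduces to this one by replacing `f, g` with `-f, -g`.
-/

open Filter Topology Function Set MeasureTheory

/-- `x` lies in the interval `(a, b)` with extended-real endpoints. -/
def MemI (a b : EReal) (x : ℝ) : Prop := a < (x : EReal) ∧ (x : EReal) < b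

/-- `f` is regulated on `(a, b)`: both one-sided limits exist (as real numbers)
at every point of `(a, b)`. -/
def RegulatedOn' (f : ℝ → ℝ) (a b : EReal) : Prop :=
  ∀ x : ℝ, MemI a b x →
    (∃ L : ℝ, Tendsto f (𝓝[<] x) (𝓝 L)) ∧ ∃ R : ℝ, Tendsto f (𝓝[>] x) (𝓝 R)

/-- The symmetric `α`-derivative of `f` at `x` equals `A`:
`(D_α f)(x) = lim_{h↓0} (f⁻(x+h) - f⁺(x-h)) / (α⁻(x+h) - α⁺(x-h))`. -/
def HasDerivAlpha (f α : ℝ → ℝ) (x A : ℝ) : Prop :=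
  Tendsto (fun h : ℝ =>
      (leftLim f (x + h) - rightLim f (x - h)) /
        (leftLim α (x + h) - rightLim α (x - h)))
    (𝓝[>] (0 : ℝ)) (𝓝 A)

/-- The filter of real numbers approaching `b : EReal` from the left (`x ↑ b`). -/
noncomputable def leftFilter (b : EReal) : Filter ℝ := comap (fun x : ℝ => (x : EReal)) (𝓝[<] b)

/-- The filter of real numbers approaching `a : EReal` from the right (`x ↓ a`). -/
noncomputable def rightFilter (a : EReal) : Filter ℝ := comap (fun x : ℝ => (x : EReal)) (𝓝[>] a)

section LeftRightLim

variable {α β : Type*} [LinearOrder α] [TopologicalSpace α] [OrderTopology α] [TopologicalSpace β]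

theorem tendsto_leftLim_nhdsGT_of_tendsto [RegularSpace β] {f : α → β} {x : α} {y : β}
    (h : Tendsto f (𝓝[>] x) (𝓝 y)) : Tendsto (leftLim f) (𝓝[>] x) (𝓝 y) := by
  refine (closed_nhds_basis y).tendsto_right_iff.2 fun s ⟨hs, hsc⟩ => ?_
  filter_upwards [eventually_eventually_nhdsWithin.2 (h hs), self_mem_nhdsWithin]
    with c hc (hxc : x < c)
  rw [nhdsWithin_eq_nhds.2 (Ioi_mem_nhds hxc)] at hc
  exact hsc.mem_of_mapClusterPt (mapClusterPt_leftLim f c) (hc.filter_mono nhdsWithin_le_nhds)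

theorem tendsto_rightLim_nhdsLT_of_tendsto [RegularSpace β] {f : α → β} {x : α} {y : β}
    (h : Tendsto f (𝓝[<] x) (𝓝 y)) : Tendsto (rightLim f) (𝓝[<] x) (𝓝 y) :=
  tendsto_leftLim_nhdsGT_of_tendsto (α := αᵒᵈ) h

theorem leftLim_neg [InvolutiveNeg β] [ContinuousNeg β] [T2Space β] (f : α → β) :
    leftLim (-f) = -leftLim f := by
  ext x
  rcases eq_or_neBot (𝓝[<] x) with hbot | hne
  · simp [leftLim_eq_of_eq_bot _ hbot]
  by_cases hf : ∃ y, Tendsto f (𝓝[<] x) (𝓝 y)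
  · exact leftLim_eq_of_tendsto (tendsto_leftLim_of_tendsto hf).neg
  · have hnf : ¬∃ y, Tendsto (-f) (𝓝[<] x) (𝓝 y) := fun ⟨y, hy⟩ =>
      hf ⟨-y, by simpa using hy.neg⟩
    simp [leftLim_eq_of_not_tendsto _ hf, leftLim_eq_of_not_tendsto _ hnf]

theorem rightLim_neg [InvolutiveNeg β] [ContinuousNeg β] [T2Space β] (f : α → β) :
    rightLim (-f) = -rightLim f :=
  leftLim_neg (α := αᵒᵈ) f

end LeftRightLim

theorem isClosed_setOf_forall_mem_Ico {α : Type*} [LinearOrder α] [TopologicalSpace α]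
    [ClosedIicTopology α] (x : α) (P : α → Prop) : IsClosed {w | ∀ v ∈ Ico x w, P v} := by
  have : {w | ∀ v ∈ Ico x w, P v} = ⋂ v ∈ {v | x ≤ v ∧ ¬P v}, Iic v := by
    ext w
    simp only [mem_ofPred_eq, mem_Ico, mem_iInter, mem_Iic, and_imp]
    exact forall_congr' fun v => ⟨fun h hxv hv => not_lt.1 fun hvw => hv (h hxv hvw),
      fun h hxv hvw => by_contra fun hv => (h hxv hv).not_gt hvw⟩
  rw [this]
  exact isClosed_biInter fun v _ => isClosed_Iic

theorem IsOpen.eventually_sub_add_mem {s : Set ℝ} (hs : IsOpen s) {x : ℝ} (hx : x ∈ s) :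
    ∀ᶠ t in 𝓝 (0 : ℝ), x - t ∈ s ∧ x + t ∈ s :=
  (((continuous_sub_left x).tendsto' 0 x (sub_zero x)).eventually (hs.mem_nhds hx)).and
    (((continuous_const_add x).tendsto' 0 x (add_zero x)).eventually (hs.mem_nhds hx))

theorem StrictMonoOn.eventually_rightLim_sub_lt_leftLim_add {α : ℝ → ℝ} {s : Set ℝ} {x : ℝ}
    (hα : StrictMonoOn α s) (hs : s ∈ 𝓝 x) :
    ∀ᶠ t in 𝓝[>] (0 : ℝ), rightLim α (x - t) < leftLim α (x + t) := by
  obtain ⟨l, r, hx, hsub⟩ := mem_nhds_iff_exists_Ioo_subset.1 hs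
  have hmono : ∀ y ∈ Ioo l r, ∀ z ∈ Ioo l r, y ≤ z → α y ≤ α z :=
    fun y hy z hz => hα.monotoneOn (hsub hy) (hsub hz)
  filter_upwards [(isOpen_Ioo.eventually_sub_add_mem hx).filter_mono nhdsWithin_le_nhds,
    self_mem_nhdsWithin] with t ⟨hl, hr⟩ (ht : 0 < t)
  have hleft : rightLim α (x - t) ≤ α x :=
    isClosed_Iic.mem_of_mapClusterPt (mapClusterPt_rightLim α (x - t)) <| by
      filter_upwards [Ico_mem_nhdsGE (sub_lt_self x ht)] with y hy
      exact hmono y ⟨hl.1.trans_le hy.1, hy.2.trans hx.2⟩ x hx hy.2.le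
  have hmid : x + t / 2 ∈ Ioo l r := ⟨by linarith [hx.1], by linarith [hr.2]⟩
  have hright : α (x + t / 2) ≤ leftLim α (x + t) :=
    isClosed_Ici.mem_of_mapClusterPt (mapClusterPt_leftLim α (x + t)) <| by
      filter_upwards [Ioc_mem_nhdsLE (by linarith : x + t / 2 < x + t)] with y hy
      exact hmono _ hmid y ⟨hmid.1.trans hy.1, hy.2.trans_lt hr.2⟩ hy.1.le
  calc rightLim α (x - t) ≤ α x := hleft
    _ < α (x + t / 2) := hα (hsub hx) (hsub hmid) (by linarith)
    _ ≤ leftLim α (x + t) := hright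

theorem tendsto_coe_ereal_iff {ι : Type*} {l : Filter ι} {F : ι → ℝ} {A : EReal} :
    Tendsto (fun i => (F i : EReal)) l (𝓝 A) ↔
      (∀ p : ℝ, (p : EReal) < A → ∀ᶠ i in l, p < F i) ∧
        ∀ q : ℝ, A < q → ∀ᶠ i in l, F i < q := by
  rw [tendsto_order]
  refine ⟨fun h => ⟨fun p hp => (h.1 p hp).mono fun _ => EReal.coe_lt_coe_iff.1,
    fun q hq => (h.2 q hq).mono fun _ => EReal.coe_lt_coe_iff.1⟩, fun h => ⟨fun p' hp' => ?_,
    fun q' hq' => ?_⟩⟩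
  · obtain ⟨p, hp', hp⟩ := EReal.lt_iff_exists_real_btwn.1 hp'
    exact (h.1 p hp).mono fun _ hi => hp'.trans (EReal.coe_lt_coe_iff.2 hi)
  · obtain ⟨q, hq, hq'⟩ := EReal.lt_iff_exists_real_btwn.1 hq'
    exact (h.2 q hq).mono fun _ hi => (EReal.coe_lt_coe_iff.2 hi).trans hq'

theorem HasDerivAlpha.neg {u α : ℝ → ℝ} {x D : ℝ} (h : HasDerivAlpha u α x D) :
    HasDerivAlpha (-u) α x (-D) := by
  refine (Tendsto.neg h).congr fun t => ?_
  simp only [leftLim_neg, rightLim_neg, Pi.neg_apply]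
  ring

def SymmIncreasingAt (u : ℝ → ℝ) (x : ℝ) : Prop :=
  ∀ᶠ t in 𝓝[>] (0 : ℝ), rightLim u (x - t) < leftLim u (x + t)

theorem HasDerivAlpha.symmIncreasingAt {u α : ℝ → ℝ} {s : Set ℝ} {x D : ℝ}
    (hα : StrictMonoOn α s) (hs : s ∈ 𝓝 x) (h : HasDerivAlpha u α x D) (hD : 0 < D) :
    SymmIncreasingAt u x := by
  filter_upwards [hα.eventually_rightLim_sub_lt_leftLim_add hs, h.eventually (lt_mem_nhds hD)]
    with t hden hq
  exact sub_pos.1 ((div_pos_iff_of_pos_right (sub_pos.2 hden)).1 hq)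

section Interval

variable {a b : EReal}

theorem isOpen_setOf_memI : IsOpen {x : ℝ | MemI a b x} :=
  isOpen_Ioo.preimage continuous_coe_real_ereal

theorem ordConnected_setOf_memI : OrdConnected {x : ℝ | MemI a b x} :=
  ordConnected_Ioo.preimage_mono EReal.coe_strictMono.monotone

theorem eventually_memI_leftFilter (h : a < b) : ∀ᶠ x in leftFilter b, MemI a b x :=
  preimage_mem_comap (Ioo_mem_nhdsLT h)

theorem exists_forall_memI_of_eventually_leftFilter (h : a < b) {P : ℝ → Prop}
    (hP : ∀ᶠ x in leftFilter b, P x) : ∃ c : ℝ, MemI a b c ∧ ∀ x, MemI c b x → P x := by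
  obtain ⟨t, ht, hsub⟩ := mem_comap.1 hP
  obtain ⟨l, hl, hlt⟩ := (mem_nhdsLT_iff_exists_Ioo_subset' h).1 ht
  obtain ⟨c, hc, hcb⟩ := EReal.lt_iff_exists_real_btwn.1 (max_lt hl h)
  exact ⟨c, ⟨(le_max_right _ _).trans_lt hc, hcb⟩, fun x hx =>
    hsub (hlt ⟨((le_max_left _ _).trans_lt hc).trans hx.1, hx.2⟩)⟩

theorem leftFilter_neBot (hb : ⊥ < b) : (leftFilter b).NeBot := by
  refine comap_neBot fun t ht => ?_
  obtain ⟨l, hl, hlt⟩ := (mem_nhdsLT_iff_exists_Ioo_subset' hb).1 ht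
  obtain ⟨x, hlx, hxb⟩ := EReal.lt_iff_exists_real_btwn.1 hl
  exact ⟨x, hlt ⟨hlx, hxb⟩⟩

theorem StrictMonoOn.lt_of_tendsto_leftFilter {v : ℝ → ℝ} {L : ℝ}
    (hv : StrictMonoOn v {x | MemI a b x}) (hL : Tendsto v (leftFilter b) (𝓝 L)) {x : ℝ}
    (hx : MemI a b x) : v x < L := by
  obtain ⟨y, hxy, hyb⟩ := EReal.lt_iff_exists_real_btwn.1 hx.2
  have hy : MemI a b y := ⟨hx.1.trans hxy, hyb⟩
  have := leftFilter_neBot (bot_lt_of_lt hyb)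
  refine (hv hx hy (EReal.coe_lt_coe_iff.1 hxy)).trans_le (ge_of_tendsto hL ?_)
  filter_upwards [eventually_memI_leftFilter hyb] with z hz
  exact hv.monotoneOn hy ⟨hy.1.trans hz.1, hz.2⟩ (EReal.coe_le_coe_iff.1 hz.1.le)

namespace RegulatedOn'

variable {u v : ℝ → ℝ} {x : ℝ}

theorem tendsto_leftLim (hu : RegulatedOn' u a b) (hx : MemI a b x) :
    Tendsto u (𝓝[<] x) (𝓝 (leftLim u x)) :=
  tendsto_leftLim_of_tendsto (hu x hx).1

theorem tendsto_rightLim (hu : RegulatedOn' u a b) (hx : MemI a b x) :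
    Tendsto u (𝓝[>] x) (𝓝 (rightLim u x)) :=
  tendsto_rightLim_of_tendsto (hu x hx).2

theorem tendsto_leftLim_nhdsGT (hu : RegulatedOn' u a b) (hx : MemI a b x) :
    Tendsto (leftLim u) (𝓝[>] x) (𝓝 (rightLim u x)) :=
  tendsto_leftLim_nhdsGT_of_tendsto (hu.tendsto_rightLim hx)

theorem tendsto_rightLim_nhdsLT (hu : RegulatedOn' u a b) (hx : MemI a b x) :
    Tendsto (rightLim u) (𝓝[<] x) (𝓝 (leftLim u x)) :=
  tendsto_rightLim_nhdsLT_of_tendsto (hu.tendsto_leftLim hx)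

theorem neg (hu : RegulatedOn' u a b) : RegulatedOn' (-u) a b := fun _ hx =>
  ⟨⟨_, (hu.tendsto_leftLim hx).neg⟩, ⟨_, (hu.tendsto_rightLim hx).neg⟩⟩

theorem sub_const_mul (hu : RegulatedOn' u a b) (hv : RegulatedOn' v a b) (p : ℝ) :
    RegulatedOn' (fun y => u y - p * v y) a b := fun _ hx =>
  ⟨⟨_, (hu.tendsto_leftLim hx).sub ((hv.tendsto_leftLim hx).const_mul p)⟩,
    ⟨_, (hu.tendsto_rightLim hx).sub ((hv.tendsto_rightLim hx).const_mul p)⟩⟩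

theorem leftLim_sub_const_mul (hu : RegulatedOn' u a b) (hv : RegulatedOn' v a b) (p : ℝ)
    (hx : MemI a b x) :
    leftLim (fun y => u y - p * v y) x = leftLim u x - p * leftLim v x :=
  leftLim_eq_of_tendsto ((hu.tendsto_leftLim hx).sub ((hv.tendsto_leftLim hx).const_mul p))

theorem rightLim_sub_const_mul (hu : RegulatedOn' u a b) (hv : RegulatedOn' v a b) (p : ℝ)
    (hx : MemI a b x) :
    rightLim (fun y => u y - p * v y) x = rightLim u x - p * rightLim v x :=
  rightLim_eq_of_tendsto ((hu.tendsto_rightLim hx).sub ((hv.tendsto_rightLim hx).const_mul p))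

theorem leftLim_le_rightLim (hu : RegulatedOn' u a b) (hx : MemI a b x)
    (hinc : SymmIncreasingAt u x) : leftLim u x ≤ rightLim u x := by
  have hsub : Tendsto (x - ·) (𝓝[>] 0) (𝓝[<] x) := by
    have h := (map_subLeft_nhdsGT (c := x) (a := (0 : ℝ))).le
    rwa [sub_zero] at h
  have hadd : Tendsto (x + ·) (𝓝[>] 0) (𝓝[>] x) := by
    have h := (map_add_left_nhdsGT (c := x) (a := (0 : ℝ))).le
    rwa [add_zero] at h
  exact le_of_tendsto_of_tendsto ((hu.tendsto_rightLim_nhdsLT hx).comp hsub)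
    ((hu.tendsto_leftLim_nhdsGT hx).comp hadd) (hinc.mono fun _ => le_of_lt)

theorem le_leftLim_of_forall_Ico (hu : RegulatedOn' u a b)
    (hinc : ∀ x, MemI a b x → SymmIncreasingAt u x) {w c : ℝ} (hx : MemI a b x)
    (hw : MemI a b w) (hxw : x < w) (h : ∀ v ∈ Ico x w, c ≤ leftLim u v) : c ≤ leftLim u w := by
  refine ge_of_tendsto (hu.tendsto_rightLim_nhdsLT hw) ?_
  filter_upwards [Ioo_mem_nhdsLT hxw] with v hv
  have hvI : MemI a b v := ordConnected_setOf_memI.out hx hw ⟨hv.1.le, hv.2.le⟩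
  exact (h v ⟨hv.1.le, hv.2⟩).trans (hu.leftLim_le_rightLim hvI (hinc v hvI))

theorem monotoneOn_leftLim (hu : RegulatedOn' u a b)
    (hinc : ∀ x, MemI a b x → SymmIncreasingAt u x) :
    MonotoneOn (leftLim u) {x | MemI a b x} := by
  intro x hx y hy hxy
  rcases hxy.eq_or_lt with rfl | hxy
  · rfl
  have hI : Icc x y ⊆ {z | MemI a b z} := ordConnected_setOf_memI.out hx hy
  refine le_of_forall_lt_imp_le_of_dense fun c hc => ?_
  -- continuous induction; `{w | c ≤ leftLim u w}` itself need not be closed, but `s` is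
  set s := {w | ∀ v ∈ Ico x w, c ≤ leftLim u v}
  have hstep : ∀ w ∈ s ∩ Ico x y, s ∈ 𝓝[>] w := by
    rintro w ⟨hws, hxw, hwy⟩
    have hwI : MemI a b w := hI ⟨hxw, hwy.le⟩
    have hw : c ≤ leftLim u w := by
      rcases hxw.eq_or_lt with rfl | hxw
      · exact hc.le
      · exact hu.le_leftLim_of_forall_Ico hinc hx hwI hxw hws
    have hright : ∀ᶠ v in 𝓝[>] w, c ≤ leftLim u v := by
      rcases hxw.eq_or_lt with rfl | hxw
      · have hcx : c < rightLim u x := hc.trans_le (hu.leftLim_le_rightLim hx (hinc x hx))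
        exact ((hu.tendsto_leftLim_nhdsGT hx).eventually (lt_mem_nhds hcx)).mono
          fun _ => le_of_lt
      · rw [← add_zero w, ← map_add_left_nhdsGT, eventually_map]
        filter_upwards [hinc w hwI, Ioo_mem_nhdsGT (sub_pos.2 hxw)] with t ht ht'
        have hwt : w - t ∈ Ico x w := ⟨by linarith [ht'.2], by linarith [ht'.1]⟩
        have hwtI : MemI a b (w - t) := hI ⟨hwt.1, hwt.2.le.trans hwy.le⟩
        calc c ≤ leftLim u (w - t) := hws _ hwt
          _ ≤ rightLim u (w - t) := hu.leftLim_le_rightLim hwtI (hinc _ hwtI)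
          _ ≤ leftLim u (w + t) := ht.le
    obtain ⟨w₁, hww₁, hw₁⟩ := mem_nhdsGT_iff_exists_Ioo_subset.1 hright
    filter_upwards [Ioo_mem_nhdsGT hww₁] with w' hw' v ⟨hxv, hvw'⟩
    rcases lt_trichotomy v w with hvw | rfl | hwv
    · exact hws v ⟨hxv, hvw⟩
    · exact hw
    · exact hw₁ ⟨hwv, hvw'.trans hw'.2⟩
  have hys : y ∈ s := ((isClosed_setOf_forall_mem_Ico x _).inter isClosed_Icc
    |>.Icc_subset_of_forall_mem_nhdsWithin (fun v hv => absurd hv.1 hv.2.not_ge) hstep)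
    ⟨hxy.le, le_rfl⟩
  exact hu.le_leftLim_of_forall_Ico hinc hx hy hxy hys

theorem strictMonoOn_leftLim (hu : RegulatedOn' u a b)
    (hinc : ∀ x, MemI a b x → SymmIncreasingAt u x) :
    StrictMonoOn (leftLim u) {x | MemI a b x} := by
  intro x hx y hy hxy
  have hI : Icc x y ⊆ {z | MemI a b z} := ordConnected_setOf_memI.out hx hy
  have hz : (x + y) / 2 ∈ Ioo x y := ⟨by linarith, by linarith⟩
  obtain ⟨t, ht, hzt, hzt'⟩ := ((hinc _ (hI (Ioo_subset_Icc_self hz))).and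
    ((isOpen_Ioo.eventually_sub_add_mem hz).filter_mono nhdsWithin_le_nhds)).exists
  have hztI : MemI a b ((x + y) / 2 - t) := hI (Ioo_subset_Icc_self hzt)
  calc leftLim u x ≤ leftLim u ((x + y) / 2 - t) :=
        monotoneOn_leftLim hu hinc hx hztI hzt.1.le
    _ ≤ rightLim u ((x + y) / 2 - t) := hu.leftLim_le_rightLim hztI (hinc _ hztI)
    _ < leftLim u ((x + y) / 2 + t) := ht
    _ ≤ leftLim u y := monotoneOn_leftLim hu hinc (hI (Ioo_subset_Icc_self hzt')) hy hzt'.2.le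

theorem leftLim_lt_of_hasDerivAlpha_pos {α : ℝ → ℝ} (hu : RegulatedOn' u a b)
    (hα : StrictMonoOn α {x | MemI a b x})
    (hD : ∀ x, MemI a b x → ∃ D > 0, HasDerivAlpha u α x D) {L : ℝ}
    (hL : Tendsto (leftLim u) (leftFilter b) (𝓝 L)) {x : ℝ} (hx : MemI a b x) :
    leftLim u x < L := by
  refine (hu.strictMonoOn_leftLim fun y hy => ?_).lt_of_tendsto_leftFilter hL hx
  obtain ⟨D, hD0, hDy⟩ := hD y hy
  exact hDy.symmIncreasingAt hα (isOpen_setOf_memI.mem_nhds hy) hD0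

end RegulatedOn'

theorem HasDerivAlpha.sub_const_mul {u v α : ℝ → ℝ} {x Du Dv : ℝ} (hu : RegulatedOn' u a b)
    (hv : RegulatedOn' v a b) (hx : MemI a b x) (hDu : HasDerivAlpha u α x Du)
    (hDv : HasDerivAlpha v α x Dv) (p : ℝ) :
    HasDerivAlpha (fun y => u y - p * v y) α x (Du - p * Dv) := by
  refine (hDu.sub (hDv.const_mul p)).congr' ?_
  filter_upwards [(isOpen_setOf_memI.eventually_sub_add_mem hx).filter_mono nhdsWithin_le_nhds]
    with t ⟨hxt, hxt'⟩
  rw [hu.leftLim_sub_const_mul hv p hxt', hu.rightLim_sub_const_mul hv p hxt]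
  ring

end Interval

section LHospital

variable {a b : EReal} {f g α Df Dg : ℝ → ℝ}

theorem eventually_lt_div_leftLim (hab : a < b) (hf : RegulatedOn' f a b)
    (hg : RegulatedOn' g a b) (hα : StrictMonoOn α {x | MemI a b x})
    (hDf : ∀ x, MemI a b x → HasDerivAlpha f α x (Df x))
    (hDg : ∀ x, MemI a b x → HasDerivAlpha g α x (Dg x)) (hpos : ∀ x, MemI a b x → 0 < Dg x)
    (hf0 : Tendsto (leftLim f) (leftFilter b) (𝓝 0))
    (hg0 : Tendsto (leftLim g) (leftFilter b) (𝓝 0)) {p : ℝ}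
    (hp : ∀ᶠ x in leftFilter b, p < Df x / Dg x) :
    ∀ᶠ x in leftFilter b, p < leftLim f x / leftLim g x := by
  obtain ⟨c, hc, hcp⟩ := exists_forall_memI_of_eventually_leftFilter hab hp
  have hsub : ∀ x, MemI c b x → MemI a b x := fun x hx => ⟨hc.1.trans hx.1, hx.2⟩
  have hg_neg : ∀ x, MemI a b x → leftLim g x < 0 := fun x hx =>
    hg.leftLim_lt_of_hasDerivAlpha_pos hα (fun y hy => ⟨Dg y, hpos y hy, hDg y hy⟩) hg0 hx
  have hu : RegulatedOn' (fun y => f y - p * g y) c b := fun y hy =>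
    hf.sub_const_mul hg p y (hsub y hy)
  have hDu : ∀ y, MemI c b y → ∃ D > 0, HasDerivAlpha (fun y => f y - p * g y) α y D := by
    intro y hy
    have hpy : p * Dg y < Df y := (lt_div_iff₀ (hpos y (hsub y hy))).1 (hcp y hy)
    exact ⟨_, sub_pos.2 hpy,
      (hDf y (hsub y hy)).sub_const_mul hf hg (hsub y hy) (hDg y (hsub y hy)) p⟩
  have hu0 : Tendsto (leftLim fun y => f y - p * g y) (leftFilter b) (𝓝 0) := by
    have h := hf0.sub (hg0.const_mul p)
    rw [mul_zero, sub_zero] at h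
    refine h.congr' ?_
    filter_upwards [eventually_memI_leftFilter hab] with x hx
    exact (hf.leftLim_sub_const_mul hg p hx).symm
  filter_upwards [eventually_memI_leftFilter hc.2] with x hx
  have hux := hu.leftLim_lt_of_hasDerivAlpha_pos (hα.mono fun y => hsub y) hDu hu0 hx
  rw [hf.leftLim_sub_const_mul hg p (hsub x hx)] at hux
  rw [lt_div_iff_of_neg (hg_neg x (hsub x hx))]
  linarith

theorem tendsto_div_leftLim_of_pos (hab : a < b) (hf : RegulatedOn' f a b)
    (hg : RegulatedOn' g a b) (hα : StrictMonoOn α {x | MemI a b x})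
    (hDf : ∀ x, MemI a b x → HasDerivAlpha f α x (Df x))
    (hDg : ∀ x, MemI a b x → HasDerivAlpha g α x (Dg x)) (hpos : ∀ x, MemI a b x → 0 < Dg x)
    {A : EReal} (hratio : Tendsto (fun x => ((Df x / Dg x : ℝ) : EReal)) (leftFilter b) (𝓝 A))
    (hf0 : Tendsto (leftLim f) (leftFilter b) (𝓝 0))
    (hg0 : Tendsto (leftLim g) (leftFilter b) (𝓝 0)) :
    Tendsto (fun x => ((leftLim f x / leftLim g x : ℝ) : EReal)) (leftFilter b) (𝓝 A) := by
  rw [tendsto_coe_ereal_iff] at hratio ⊢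
  refine ⟨fun p hp => eventually_lt_div_leftLim hab hf hg hα hDf hDg hpos hf0 hg0 (hratio.1 p hp),
    fun q hq => ?_⟩
  have hnf0 : Tendsto (leftLim (-f)) (leftFilter b) (𝓝 0) := by
    rw [leftLim_neg, ← neg_zero]
    exact hf0.neg
  have hnp : ∀ᶠ x in leftFilter b, -q < (-Df) x / Dg x := by
    filter_upwards [hratio.2 q hq] with x hx
    rw [Pi.neg_apply, neg_div]
    exact neg_lt_neg hx
  filter_upwards [eventually_lt_div_leftLim hab hf.neg hg hα (fun x hx => (hDf x hx).neg) hDg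
    hpos hnf0 hg0 hnp] with x hx
  rw [leftLim_neg, Pi.neg_apply, neg_div] at hx
  exact neg_lt_neg_iff.1 hx

end LHospital

/-- L'Hospital's rule for regulated functions, `0/0` case. -/
theorem stmt15 (a b : EReal) (hab : a < b) (f g α : ℝ → ℝ) (Df Dg : ℝ → ℝ) (A : EReal)
    (hf : RegulatedOn' f a b) (hg : RegulatedOn' g a b)
    (hα : StrictMonoOn α {x : ℝ | MemI a b x})
    (hDf : ∀ x : ℝ, MemI a b x → HasDerivAlpha f α x (Df x))
    (hDg : ∀ x : ℝ, MemI a b x → HasDerivAlpha g α x (Dg x))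
    (hsign : (∀ x : ℝ, MemI a b x → 0 < Dg x) ∨ (∀ x : ℝ, MemI a b x → Dg x < 0))
    (hratio : Tendsto (fun x : ℝ => ((Df x / Dg x : ℝ) : EReal)) (leftFilter b) (𝓝 A))
    (hf0 : Tendsto (leftLim f) (leftFilter b) (𝓝 0))
    (hg0 : Tendsto (leftLim g) (leftFilter b) (𝓝 0)) :
    Tendsto (fun x : ℝ => ((leftLim f x / leftLim g x : ℝ) : EReal))
      (leftFilter b) (𝓝 A) := by
  rcases hsign with hpos | hneg
  · exact tendsto_div_leftLim_of_pos hab hf hg hα hDf hDg hpos hratio hf0 hg0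
  have H := tendsto_div_leftLim_of_pos (Df := -Df) (Dg := -Dg) hab hf.neg hg.neg hα
    (fun x hx => (hDf x hx).neg) (fun x hx => (hDg x hx).neg) (fun x hx => neg_pos.2 (hneg x hx))
    (by simpa only [Pi.neg_apply, neg_div_neg_eq] using hratio)
    (by rw [leftLim_neg, ← neg_zero]; exact hf0.neg)
    (by rw [leftLim_neg, ← neg_zero]; exact hg0.neg)
  simpa only [leftLim_neg, Pi.neg_apply, neg_div_neg_eq] using H
end

section
/- Local Lipschitz estimate from a bounded α-derivative: Let f be regulated on (a,b), α strictly increasing, with (D_α f)(x) existing for all x ∈ (a,b), and suppose D_α f is locally bounded on (a,b). Then for any a < s < t < b there exists M > 0 such that |f^-(y) - f^+(x)| ≤ M (α^-(y) - α^+(x)) for all s ≤ x < y ≤ t. Consequently f^- is of locally bounded variation on (a,b). -/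
open Filter Topology Function Set MeasureTheory

/-!
Suppose `|D_α f| < M` on `[x, y]`. For `g = M α + σ f` with `|σ| ≤ 1`, the bound on the symmetric
quotients says `g⁺(c - h) ≤ g⁻(c + h)` for all small `h > 0`, at every `c ∈ [x, y]`. A supremum
argument upgrades this symmetric, infinitesimal monotonicity to `g⁺(x) ≤ g⁻(y)`; the cases
`σ = ±1` give `|f⁻(y) - f⁺(x)| ≤ M (α⁻(y) - α⁺(x))`. Letting `h → 0` bounds the jumps of `f`
by `M` times those of `α`, so `|f⁻(v) - f⁻(u)| ≤ M (α⁻(v) - α⁻(u))` and the variation of `f⁻`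
is dominated by that of the monotone function `M α⁻`.
-/

theorem tendsto_nhdsWithin_of_forall_mapClusterPt {X Y : Type*} [TopologicalSpace X]
    [TopologicalSpace Y] [RegularSpace Y] {f g : X → Y} {s : Set X} {a : X} {b : Y}
    (hs : IsOpen s) (hf : Tendsto f (𝓝[s] a) (𝓝 b)) (hg : ∀ x, MapClusterPt (g x) (𝓝 x) f) :
    Tendsto g (𝓝[s] a) (𝓝 b) := by
  refine (closed_nhds_basis b).tendsto_right_iff.2 fun V ⟨hV, hVc⟩ => ?_
  filter_upwards [eventually_eventually_nhdsWithin.2 (hf hV), self_mem_nhdsWithin] with x hx hxs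
  rw [hs.nhdsWithin_eq hxs] at hx
  exact hVc.mem_of_mapClusterPt (hg x) hx

section OneSidedLimits

variable {α β : Type*} [LinearOrder α] [TopologicalSpace α] [OrderTopology α]
  [TopologicalSpace β] [RegularSpace β] {f : α → β} {s : Set α} {a : α} {b : β}

theorem tendsto_leftLim_nhdsWithin (hs : IsOpen s) (hf : Tendsto f (𝓝[s] a) (𝓝 b)) :
    Tendsto (leftLim f) (𝓝[s] a) (𝓝 b) :=
  tendsto_nhdsWithin_of_forall_mapClusterPt hs hf fun x =>
    (mapClusterPt_leftLim f x).mono nhdsWithin_le_nhds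

theorem tendsto_rightLim_nhdsWithin (hs : IsOpen s) (hf : Tendsto f (𝓝[s] a) (𝓝 b)) :
    Tendsto (rightLim f) (𝓝[s] a) (𝓝 b) :=
  tendsto_nhdsWithin_of_forall_mapClusterPt hs hf fun x =>
    (mapClusterPt_rightLim f x).mono nhdsWithin_le_nhds

end OneSidedLimits

section Real

variable {f g α : ℝ → ℝ} {s : Set ℝ} {x y z c : ℝ}

theorem rightLim_le_of_eventually_le (h : ∀ᶠ w in 𝓝[≥] x, g w ≤ c) : rightLim g x ≤ c :=
  isClosed_Iic.mem_of_mapClusterPt (mapClusterPt_rightLim g x) h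

theorem le_leftLim_of_eventually_le (h : ∀ᶠ w in 𝓝[≤] x, c ≤ g w) : c ≤ leftLim g x :=
  isClosed_Ici.mem_of_mapClusterPt (mapClusterPt_leftLim g x) h

theorem StrictMonoOn.rightLim_lt_leftLim (hα : StrictMonoOn α s) (hxy : x < y)
    (hs : Icc x y ⊆ s) : rightLim α x < leftLim α y := by
  obtain ⟨m, hxm, hmy⟩ := exists_between hxy
  obtain ⟨m', hmm', hm'y⟩ := exists_between hmy
  calc rightLim α x ≤ α m := rightLim_le_of_eventually_le <|
        mem_of_superset (Icc_mem_nhdsGE hxm) fun w hw =>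
          hα.monotoneOn (hs ⟨hw.1, hw.2.trans hmy.le⟩) (hs ⟨hxm.le, hmy.le⟩) hw.2
    _ < α m' := hα (hs ⟨hxm.le, hmy.le⟩) (hs ⟨(hxm.trans hmm').le, hm'y.le⟩) hmm'
    _ ≤ leftLim α y := le_leftLim_of_eventually_le <|
        mem_of_superset (Icc_mem_nhdsLE hm'y) fun w hw =>
          hα.monotoneOn (hs ⟨(hxm.trans hmm').le, hm'y.le⟩)
            (hs ⟨(hxm.trans hmm').le.trans hw.1, hw.2⟩) hw.1

def IsRegulatedAt (g : ℝ → ℝ) (z : ℝ) : Prop :=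
  Tendsto g (𝓝[<] z) (𝓝 (leftLim g z)) ∧ Tendsto g (𝓝[>] z) (𝓝 (rightLim g z))

theorem RegulatedOn'.isRegulatedAt {a b : EReal} (hf : RegulatedOn' f a b) (hz : MemI a b z) :
    IsRegulatedAt f z :=
  ⟨tendsto_leftLim_of_tendsto (hf z hz).1, tendsto_rightLim_of_tendsto (hf z hz).2⟩

theorem MonotoneOn.isRegulatedAt (hα : MonotoneOn α s) (hs : s ∈ 𝓝 z) : IsRegulatedAt α z := by
  obtain ⟨l, hlz, hl⟩ := exists_Ioc_subset_of_mem_nhds hs ⟨z - 1, by linarith⟩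
  obtain ⟨u, hzu, hu⟩ := exists_Ico_subset_of_mem_nhds hs ⟨z + 1, by linarith⟩
  refine ⟨tendsto_leftLim_of_tendsto ⟨_, (hα.mono (Ioo_subset_Ioc_self.trans hl))
      |>.tendsto_nhdsWithin_Ioo_left (nonempty_Ioo.2 hlz) ⟨α z, ?_⟩⟩,
    tendsto_rightLim_of_tendsto ⟨_, (hα.mono (Ioo_subset_Ico_self.trans hu))
      |>.tendsto_nhdsWithin_Ioo_right (nonempty_Ioo.2 hzu) ⟨α z, ?_⟩⟩⟩
  · rintro _ ⟨w, hw, rfl⟩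
    exact hα (hl ⟨hw.1, hw.2.le⟩) (hl ⟨hlz, le_rfl⟩) hw.2.le
  · rintro _ ⟨w, hw, rfl⟩
    exact hα (hu ⟨le_rfl, hzu⟩) (hu ⟨hw.1.le, hw.2⟩) hw.1.le

theorem eventually_abs_sub_le_of_hasDerivAlpha {A M : ℝ} (hD : HasDerivAlpha f α c A)
    (hA : |A| < M) (hα : StrictMonoOn α s) (hs : s ∈ 𝓝 c) :
    ∀ᶠ h in 𝓝[>] 0, |leftLim f (c + h) - rightLim f (c - h)| ≤
      M * (leftLim α (c + h) - rightLim α (c - h)) := by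
  obtain ⟨ε, hε, hball⟩ := Metric.mem_nhds_iff.1 hs
  filter_upwards [hD.abs.eventually_lt_const hA, Ioo_mem_nhdsGT hε] with h hquot hh
  have hsub : Icc (c - h) (c + h) ⊆ s := by
    rw [← Real.closedBall_eq_Icc]
    exact (Metric.closedBall_subset_ball hh.2).trans hball
  have hden : 0 < leftLim α (c + h) - rightLim α (c - h) :=
    sub_pos.2 (hα.rightLim_lt_leftLim (by linarith [hh.1]) hsub)
  calc |leftLim f (c + h) - rightLim f (c - h)|
      = |(leftLim f (c + h) - rightLim f (c - h)) /
          (leftLim α (c + h) - rightLim α (c - h))| * (leftLim α (c + h) - rightLim α (c - h)) := by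
        rw [abs_div, abs_of_pos hden, div_mul_cancel₀ _ hden.ne']
    _ ≤ M * (leftLim α (c + h) - rightLim α (c - h)) :=
        mul_le_mul_of_nonneg_right hquot.le hden.le

theorem IsRegulatedAt.tendsto_leftLim_add (hg : IsRegulatedAt g z) :
    Tendsto (fun h => leftLim g (z + h)) (𝓝[>] 0) (𝓝 (rightLim g z)) :=
  (tendsto_leftLim_nhdsWithin isOpen_Ioi hg.2).comp
    (map_add_left_nhdsGT.trans_le (by rw [add_zero]))

theorem IsRegulatedAt.tendsto_rightLim_sub (hg : IsRegulatedAt g z) :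
    Tendsto (fun h => rightLim g (z - h)) (𝓝[>] 0) (𝓝 (leftLim g z)) :=
  (tendsto_rightLim_nhdsWithin isOpen_Iio hg.1).comp
    (map_subLeft_nhdsGT.trans_le (by rw [sub_zero]))

theorem abs_rightLim_sub_leftLim_le_of_hasDerivAlpha {A M : ℝ} (hD : HasDerivAlpha f α z A)
    (hA : |A| < M) (hα : StrictMonoOn α s) (hs : s ∈ 𝓝 z) (hf : IsRegulatedAt f z)
    (hαz : IsRegulatedAt α z) :
    |rightLim f z - leftLim f z| ≤ M * (rightLim α z - leftLim α z) :=
  le_of_tendsto_of_tendsto (hf.tendsto_leftLim_add.sub hf.tendsto_rightLim_sub).abs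
    ((hαz.tendsto_leftLim_add.sub hαz.tendsto_rightLim_sub).const_mul M)
    (eventually_abs_sub_le_of_hasDerivAlpha hD hA hα hs)

end Real

theorem le_of_forall_eventually_sub_le_add {Gp Gm : ℝ → ℝ} {u v : ℝ} (huv : u < v)
    (hleft : ∀ z ∈ Ioc u v, Tendsto Gp (𝓝[<] z) (𝓝 (Gm z)))
    (hright : ∀ z ∈ Ico u v, Tendsto Gp (𝓝[>] z) (𝓝 (Gp z)))
    (hsymm : ∀ c ∈ Icc u v, ∀ᶠ h in 𝓝[>] 0, Gp (c - h) ≤ Gm (c + h)) :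
    Gp u ≤ Gm v := by
  refine le_of_forall_gt_imp_ge_of_dense fun l hl => ?_
  by_contra! hlu
  -- `p = sup E` is the last point of `[u, v)` where `Gp` exceeds `l`: the symmetric hypothesis at
  -- `p`, with `Gm ≤ l` just right of `p`, forces `Gp ≤ l` on a left neighbourhood of `p`.
  set E := {z ∈ Ico u v | l < Gp z}
  have huE : u ∈ E := ⟨⟨le_rfl, huv⟩, hlu⟩
  have hE : BddAbove E := ⟨v, fun z hz => hz.1.2.le⟩
  set p := sSup E
  have hup : u ≤ p := le_csSup hE huE
  have le_of_Ioo : ∀ l', (∀ z ∈ Ioo l' v, Gp z ≤ l) → p ≤ l' := fun l' h =>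
    csSup_le ⟨u, huE⟩ fun z hz => not_lt.1 fun hz' => (h z ⟨hz', hz.1.2⟩).not_gt hz.2
  have hpv : p < v := by
    obtain ⟨l', hl'v, hl'⟩ :=
      mem_nhdsLT_iff_exists_Ioo_subset.1 ((hleft v ⟨huv, le_rfl⟩).eventually_lt_const hl)
    exact (le_of_Ioo l' fun z hz => (hl' hz).le).trans_lt hl'v
  have hGp : ∀ z ∈ Ioo p v, Gp z ≤ l := fun z hz =>
    not_lt.1 fun h => hz.1.not_ge (le_csSup hE ⟨⟨hup.trans hz.1.le, hz.2⟩, h⟩)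
  have hGm : ∀ z ∈ Ioc p v, Gm z ≤ l := fun z hz =>
    le_of_tendsto (hleft z ⟨hup.trans_lt hz.1, hz.2⟩) <|
      mem_of_superset (Ioo_mem_nhdsLT hz.1) fun w hw => hGp w ⟨hw.1, hw.2.trans_le hz.2⟩
  have hGp_p : Gp p ≤ l :=
    le_of_tendsto (hright p ⟨hup, hpv⟩) (mem_of_superset (Ioo_mem_nhdsGT hpv) hGp)
  have hGp_left : ∀ᶠ h in 𝓝[>] 0, Gp (p - h) ≤ l := by
    filter_upwards [hsymm p ⟨hup, hpv.le⟩, Ioo_mem_nhdsGT (sub_pos.2 hpv)] with h h₁ h₂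
    exact h₁.trans (hGm _ ⟨by linarith [h₂.1], by linarith [h₂.2]⟩)
  obtain ⟨r, hr, hr'⟩ := mem_nhdsGT_iff_exists_Ioo_subset.1 hGp_left
  have : p ≤ p - r := le_of_Ioo (p - r) fun z hz => by
    rcases lt_trichotomy z p with hzp | rfl | hpz
    · simpa using hr' (show p - z ∈ Ioo 0 r from ⟨by linarith, by linarith [hz.1]⟩)
    · exact hGp_p
    · exact hGp z ⟨hpz, hz.2⟩
  linarith [show (0 : ℝ) < r from hr]

section Estimate

variable {S : Set ℝ} {f α D : ℝ → ℝ} {x y M : ℝ}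

theorem mul_rightLim_add_le_mul_leftLim_add (hS : IsOpen S) (hf : ∀ z ∈ S, IsRegulatedAt f z)
    (hα : StrictMonoOn α S) (hD : ∀ z ∈ S, HasDerivAlpha f α z (D z)) (hxy : x < y)
    (hxyS : Icc x y ⊆ S) (hM : ∀ c ∈ Icc x y, |D c| < M) {σ : ℝ} (hσ : |σ| ≤ 1) :
    M * rightLim α x + σ * rightLim f x ≤ M * leftLim α y + σ * leftLim f y := by
  have hαreg : ∀ z ∈ S, IsRegulatedAt α z := fun z hz =>
    hα.monotoneOn.isRegulatedAt (hS.mem_nhds hz)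
  refine le_of_forall_eventually_sub_le_add (Gp := fun z => M * rightLim α z + σ * rightLim f z)
    (Gm := fun z => M * leftLim α z + σ * leftLim f z) hxy (fun z hz => ?_) (fun z hz => ?_)
    (fun c hc => ?_)
  · have hzS := hxyS (Ioc_subset_Icc_self hz)
    exact ((tendsto_rightLim_nhdsWithin isOpen_Iio (hαreg z hzS).1).const_mul M).add
      ((tendsto_rightLim_nhdsWithin isOpen_Iio (hf z hzS).1).const_mul σ)
  · have hzS := hxyS (Ico_subset_Icc_self hz)
    exact ((tendsto_rightLim_nhdsWithin isOpen_Ioi (hαreg z hzS).2).const_mul M).add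
      ((tendsto_rightLim_nhdsWithin isOpen_Ioi (hf z hzS).2).const_mul σ)
  · filter_upwards [eventually_abs_sub_le_of_hasDerivAlpha (hD c (hxyS hc)) (hM c hc) hα
      (hS.mem_nhds (hxyS hc))] with h hh
    have : σ * (rightLim f (c - h) - leftLim f (c + h)) ≤
        |leftLim f (c + h) - rightLim f (c - h)| :=
      calc σ * (rightLim f (c - h) - leftLim f (c + h))
          ≤ |σ| * |rightLim f (c - h) - leftLim f (c + h)| := by
            rw [← abs_mul]; exact le_abs_self _
        _ ≤ |leftLim f (c + h) - rightLim f (c - h)| := by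
            rw [abs_sub_comm]; exact mul_le_of_le_one_left (abs_nonneg _) hσ
    linarith

theorem abs_leftLim_sub_rightLim_le (hS : IsOpen S) (hf : ∀ z ∈ S, IsRegulatedAt f z)
    (hα : StrictMonoOn α S) (hD : ∀ z ∈ S, HasDerivAlpha f α z (D z)) (hxy : x < y)
    (hxyS : Icc x y ⊆ S) (hM : ∀ c ∈ Icc x y, |D c| < M) :
    |leftLim f y - rightLim f x| ≤ M * (leftLim α y - rightLim α x) := by
  have h₁ := mul_rightLim_add_le_mul_leftLim_add hS hf hα hD hxy hxyS hM (σ := 1) (by simp)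
  have h₂ := mul_rightLim_add_le_mul_leftLim_add hS hf hα hD hxy hxyS hM (σ := -1) (by simp)
  rw [abs_le, mul_sub]
  constructor <;> linarith

theorem abs_leftLim_sub_leftLim_le (hS : IsOpen S) (hf : ∀ z ∈ S, IsRegulatedAt f z)
    (hα : StrictMonoOn α S) (hD : ∀ z ∈ S, HasDerivAlpha f α z (D z)) (hxy : x ≤ y)
    (hxyS : Icc x y ⊆ S) (hM : ∀ c ∈ Icc x y, |D c| < M) :
    |leftLim f y - leftLim f x| ≤ M * leftLim α y - M * leftLim α x := by
  rcases hxy.eq_or_lt with rfl | hlt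
  · simp
  have hxS : x ∈ S := hxyS ⟨le_rfl, hxy⟩
  have hjump := abs_rightLim_sub_leftLim_le_of_hasDerivAlpha (hD x hxS) (hM x ⟨le_rfl, hxy⟩) hα
    (hS.mem_nhds hxS) (hf x hxS) (hα.monotoneOn.isRegulatedAt (hS.mem_nhds hxS))
  calc |leftLim f y - leftLim f x|
      ≤ |leftLim f y - rightLim f x| + |rightLim f x - leftLim f x| := abs_sub_le _ _ _
    _ ≤ M * (leftLim α y - rightLim α x) + M * (rightLim α x - leftLim α x) :=
        add_le_add (abs_leftLim_sub_rightLim_le hS hf hα hD hlt hxyS hM) hjump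
    _ = M * leftLim α y - M * leftLim α x := by ring

end Estimate

theorem locallyBoundedVariationOn_of_abs_sub_le {β : Type*} [LinearOrder β] {F G : β → ℝ}
    {s : Set β} (h : ∀ u ∈ s, ∀ v ∈ s, u ≤ v → |F v - F u| ≤ G v - G u) :
    LocallyBoundedVariationOn F s := by
  have hG : MonotoneOn G s := fun u hu v hv huv =>
    sub_nonneg.1 ((abs_nonneg _).trans (h u hu v hv huv))
  intro a b ha hb
  refine ne_top_of_le_ne_top (hG.locallyBoundedVariationOn a b ha hb) ?_
  refine iSup_le fun ⟨n, u, hu, us⟩ =>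
    (Finset.sum_le_sum fun i _ => ?_).trans (eVariationOn.sum_le hu us)
  rw [edist_dist, edist_dist, Real.dist_eq, Real.dist_eq]
  exact ENNReal.ofReal_le_ofReal
    ((h _ (us i).1 _ (us (i + 1)).1 (hu (Nat.le_succ i))).trans (le_abs_self _))

theorem stmt18_general (a b : EReal) (f α : ℝ → ℝ) (D : ℝ → ℝ)
    (hf : RegulatedOn' f a b) (hα : StrictMonoOn α {x : ℝ | MemI a b x})
    (hD : ∀ x : ℝ, MemI a b x → HasDerivAlpha f α x (D x))
    (hbdd : ∀ s t : ℝ, MemI a b s → MemI a b t →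
      ∃ M : ℝ, ∀ x ∈ Icc s t, |D x| ≤ M) :
    (∀ s t : ℝ, MemI a b s → MemI a b t → s < t →
      ∃ M : ℝ, 0 < M ∧ ∀ x y : ℝ, s ≤ x → x < y → y ≤ t →
        |leftLim f y - rightLim f x| ≤ M * (leftLim α y - rightLim α x)) ∧
    LocallyBoundedVariationOn (leftLim f) {x : ℝ | MemI a b x} := by
  set S := {x : ℝ | MemI a b x}
  have hS : IsOpen S := isOpen_Ioo.preimage continuous_coe_real_ereal
  have hSc : S.OrdConnected := ordConnected_Ioo.preimage_mono EReal.coe_strictMono.monotone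
  have hfS : ∀ z ∈ S, IsRegulatedAt f z := fun z hz => hf.isRegulatedAt hz
  have hbound : ∀ s t, s ∈ S → t ∈ S → ∃ M, ∀ c ∈ Icc s t, |D c| < M := fun s t hs ht =>
    let ⟨M, hM⟩ := hbdd s t hs ht
    ⟨M + 1, fun c hc => (hM c hc).trans_lt (lt_add_one M)⟩
  refine ⟨fun s t hs ht hst => ?_, fun x y hx hy => ?_⟩
  · obtain ⟨M, hM⟩ := hbound s t hs ht
    exact ⟨M, (abs_nonneg _).trans_lt (hM s ⟨le_rfl, hst.le⟩), fun x y hsx hxy hyt =>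
      abs_leftLim_sub_rightLim_le hS hfS hα hD hxy
        ((Icc_subset_Icc hsx hyt).trans (hSc.out hs ht))
        fun c hc => hM c ⟨hsx.trans hc.1, hc.2.trans hyt⟩⟩
  rcases le_or_gt x y with hxy | hyx
  · obtain ⟨M, hM⟩ := hbound x y hx hy
    have hvar : LocallyBoundedVariationOn (leftLim f) (Icc x y) :=
      locallyBoundedVariationOn_of_abs_sub_le fun u hu v hv huv =>
        abs_leftLim_sub_leftLim_le hS hfS hα hD huv
          ((Icc_subset_Icc hu.1 hv.2).trans (hSc.out hx hy))
          fun c hc => hM c ⟨hu.1.trans hc.1, hc.2.trans hv.2⟩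
    exact (hvar x y ⟨le_rfl, hxy⟩ ⟨hxy, le_rfl⟩).mono fun _ hw => ⟨hw.2, hw.2⟩
  · exact .of_subsingleton (by simp [Icc_eq_empty_of_lt hyx])

/-- A locally bounded `α`-derivative yields a local Lipschitz-type estimate with
respect to `α`, and consequently `f⁻` is of locally bounded variation. -/
theorem stmt18 (a b : EReal) (hab : a < b) (f α : ℝ → ℝ) (D : ℝ → ℝ)
    (hf : RegulatedOn' f a b) (hα : StrictMonoOn α {x : ℝ | MemI a b x})
    (hD : ∀ x : ℝ, MemI a b x → HasDerivAlpha f α x (D x))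
    (hbdd : ∀ s t : ℝ, MemI a b s → MemI a b t →
      ∃ M : ℝ, ∀ x ∈ Icc s t, |D x| ≤ M) :
    (∀ s t : ℝ, MemI a b s → MemI a b t → s < t →
      ∃ M : ℝ, 0 < M ∧ ∀ x y : ℝ, s ≤ x → x < y → y ≤ t →
        |leftLim f y - rightLim f x| ≤ M * (leftLim α y - rightLim α x)) ∧
    LocallyBoundedVariationOn (leftLim f) {x : ℝ | MemI a b x} :=
  stmt18_general a b f α D hf hα hD hbdd
end

section
/- L'Hospital's rule via Lebesgue–Stieltjes integrals (∞ case): Let α be strictly increasing on (a,b) and let u, v be locally dα-integrable on (a,b) with v > 0 dα-almost everywhere (or v < 0 dα-a.e.). Suppose there is w : (a,b) → ℝ with w = u/v dα-a.e. and lim_{x↑b} w(x) = A ∈ [-∞,∞]. Fix r ∈ (a,b). If ∫_{(r,b)} v dα = +∞ or -∞, then lim_{x↑b} (∫_{(r,x)} u dα) / (∫_{(r,x)} v dα) = A. -/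
/-!
Write `U x = ∫_{(r,x)} u dμ`, `V x = ∫_{(r,x)} v dμ`; negating `u` and `v` reduces to `v ≥ 0`.
Non-integrability of `v` near `b` makes `V` increase to `+∞` as `x ↑ b`. For `m < A` we have
`m ≤ w` near `b`, so `u - m v = (w - m) v ≥ 0` there and `U - m V` is bounded below; dividing by
`V → ∞` gives `liminf U / V ≥ m`. Symmetrically `limsup U / V ≤ m` for every `m > A`.
-/

open Filter Topology Function Set MeasureTheory

namespace LeftFilter

variable {b : EReal}

instance : (leftFilter b).IsCountablyGenerated := comap.isCountablyGenerated _ _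

lemma neBot (hb : ⊥ < b) : (leftFilter b).NeBot :=
  comap_neBot_iff.2 fun s hs => by
    obtain ⟨l, hlb, hls⟩ := (mem_nhdsLT_iff_exists_Ioo_subset' hb).1 hs
    obtain ⟨c, hlc, hcb⟩ := EReal.exists_between_coe_real hlb
    exact ⟨c, hls ⟨hlc, hcb⟩⟩

lemma eventually_lt_and_lt {c : ℝ} (hcb : (c : EReal) < b) :
    ∀ᶠ x in leftFilter b, c < x ∧ (x : EReal) < b :=
  mem_of_superset (preimage_mem_comap (Ioo_mem_nhdsLT hcb)) fun _ hx =>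
    ⟨EReal.coe_lt_coe_iff.1 hx.1, hx.2⟩

lemma exists_forall_of_eventually {r : ℝ} (hrb : (r : EReal) < b) {P : ℝ → Prop}
    (hP : ∀ᶠ x in leftFilter b, P x) :
    ∃ c : ℝ, r < c ∧ (c : EReal) < b ∧ ∀ x : ℝ, c < x → (x : EReal) < b → P x := by
  obtain ⟨s, hs, hsP⟩ := hP
  obtain ⟨l, hlb, hls⟩ := (mem_nhdsLT_iff_exists_Ioo_subset' hrb).1 hs
  obtain ⟨c, hlc, hcb⟩ := EReal.exists_between_coe_real (max_lt hlb hrb)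
  refine ⟨c, EReal.coe_lt_coe_iff.1 ((le_max_right _ _).trans_lt hlc), hcb,
    fun x hcx hxb => hsP (hls ⟨?_, hxb⟩)⟩
  exact (le_max_left _ _).trans_lt (hlc.trans (EReal.coe_lt_coe_iff.2 hcx))

lemma exists_seq_tendsto {r : ℝ} (hrb : (r : EReal) < b) :
    ∃ xs : ℕ → ℝ, (∀ n, r < xs n ∧ (xs n : EReal) < b) ∧ Tendsto xs atTop (leftFilter b) := by
  have := neBot ((EReal.bot_lt_coe r).trans hrb)
  obtain ⟨xs, hxs⟩ := Filter.exists_seq_tendsto (leftFilter b)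
  obtain ⟨N, hN⟩ := eventually_atTop.1 (hxs.eventually (eventually_lt_and_lt hrb))
  exact ⟨fun n => xs (n + N), fun n => hN _ (Nat.le_add_left N n),
    hxs.comp (tendsto_add_atTop_nat N)⟩

end LeftFilter

section AffineBounds

variable {ι : Type*} {l : Filter ι} {U V : ι → ℝ}

lemma eventually_lt_div_of_const_mul_add_le {z m K : ℝ} (hV : Tendsto V l atTop) (hzm : z < m)
    (hUV : ∀ᶠ x in l, m * V x + K ≤ U x) : ∀ᶠ x in l, z < U x / V x := by
  have hKV : Tendsto (fun x => K / V x) l (𝓝 0) := tendsto_const_nhds.div_atTop hV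
  filter_upwards [hV.eventually_gt_atTop 0, hKV.eventually (lt_mem_nhds (sub_neg.2 hzm)), hUV]
    with x hVx hKx hx
  calc z < m + K / V x := by linarith
    _ = (m * V x + K) / V x := by field_simp
    _ ≤ U x / V x := div_le_div_of_nonneg_right hx hVx.le

lemma eventually_div_lt_of_le_const_mul_add {z m K : ℝ} (hV : Tendsto V l atTop) (hmz : m < z)
    (hUV : ∀ᶠ x in l, U x ≤ m * V x + K) : ∀ᶠ x in l, U x / V x < z := by
  have := eventually_lt_div_of_const_mul_add_le (U := fun x => -U x) (K := -K) hV (neg_lt_neg hmz)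
    (hUV.mono fun x hx => by linarith)
  exact this.mono fun x hx => by rw [neg_div] at hx; linarith

lemma tendsto_div_of_affine_bounds {A : EReal} (hV : Tendsto V l atTop)
    (hlow : ∀ m : ℝ, (m : EReal) < A → ∃ K, ∀ᶠ x in l, m * V x + K ≤ U x)
    (hup : ∀ m : ℝ, A < m → ∃ K, ∀ᶠ x in l, U x ≤ m * V x + K) :
    Tendsto (fun x => ((U x / V x : ℝ) : EReal)) l (𝓝 A) := by
  refine tendsto_order.2 ⟨fun y hyA => ?_, fun y hAy => ?_⟩
  · obtain ⟨m, hym, hmA⟩ := EReal.exists_between_coe_real hyA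
    obtain ⟨z, hyz, hzm⟩ := EReal.exists_between_coe_real hym
    obtain ⟨K, hK⟩ := hlow m hmA
    exact (eventually_lt_div_of_const_mul_add_le hV (EReal.coe_lt_coe_iff.1 hzm) hK).mono
      fun x hx => hyz.trans (EReal.coe_lt_coe_iff.2 hx)
  · obtain ⟨m, hAm, hmy⟩ := EReal.exists_between_coe_real hAy
    obtain ⟨z, hmz, hzy⟩ := EReal.exists_between_coe_real hmy
    obtain ⟨K, hK⟩ := hup m hAm
    exact (eventually_div_lt_of_le_const_mul_add hV (EReal.coe_lt_coe_iff.1 hmz) hK).mono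
      fun x hx => (EReal.coe_lt_coe_iff.2 hx).trans hzy

end AffineBounds

section SetIntegralIoo

variable {μ : Measure ℝ} {b : EReal} {r : ℝ}

lemma setIntegral_Ioc_le_setIntegral_Ioo {f : ℝ → ℝ} {c x : ℝ} (hrc : r ≤ c) (hcx : c < x)
    (hf : IntegrableOn f (Ioo r x) μ) (hf0 : 0 ≤ᵐ[μ.restrict (Ioo c x)] f) :
    ∫ y in Ioc r c, f y ∂μ ≤ ∫ y in Ioo r x, f y ∂μ := by
  rw [← Ioc_union_Ioo_eq_Ioo hrc hcx] at hf ⊢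
  rw [setIntegral_union (Ioc_disjoint_Ioi_same.mono_right Ioo_subset_Ioi_self) measurableSet_Ioo
    hf.left_of_union hf.right_of_union]
  linarith [setIntegral_nonneg_of_ae_restrict hf0]

lemma exists_eventually_le_setIntegral_Ioo {f : ℝ → ℝ} (hrb : (r : EReal) < b)
    (hf : ∀ x : ℝ, r < x → (x : EReal) < b → IntegrableOn f (Ioo r x) μ) {P : ℝ → Prop}
    (hP : ∀ᶠ y in leftFilter b, P y)
    (hf0 : ∀ᵐ y ∂μ.restrict {y : ℝ | r < y ∧ (y : EReal) < b}, P y → 0 ≤ f y) :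
    ∃ K, ∀ᶠ x in leftFilter b, K ≤ ∫ y in Ioo r x, f y ∂μ := by
  obtain ⟨c, hrc, hcb, hcP⟩ := LeftFilter.exists_forall_of_eventually hrb hP
  refine ⟨∫ y in Ioc r c, f y ∂μ, ?_⟩
  filter_upwards [LeftFilter.eventually_lt_and_lt hcb] with x ⟨hcx, hxb⟩
  have hsub : Ioo c x ⊆ {y : ℝ | r < y ∧ (y : EReal) < b} := fun y hy =>
    ⟨hrc.trans hy.1, (EReal.coe_lt_coe_iff.2 hy.2).trans hxb⟩
  refine setIntegral_Ioc_le_setIntegral_Ioo hrc.le hcx (hf x (hrc.trans hcx) hxb) ?_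
  filter_upwards [ae_restrict_of_ae_restrict_of_subset hsub hf0, ae_restrict_mem measurableSet_Ioo]
    with y hy hyI
  exact hy (hcP y hyI.1 ((EReal.coe_lt_coe_iff.2 hyI.2).trans hxb))

lemma tendsto_setIntegral_Ioo_atTop {v : ℝ → ℝ} (hrb : (r : EReal) < b)
    (hv : ∀ x : ℝ, r < x → (x : EReal) < b → IntegrableOn v (Ioo r x) μ)
    (hv0 : ∀ᵐ y ∂μ.restrict {y : ℝ | r < y ∧ (y : EReal) < b}, 0 ≤ v y)
    (hinf : ¬ IntegrableOn v {y : ℝ | r < y ∧ (y : EReal) < b} μ) :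
    Tendsto (fun x => ∫ y in Ioo r x, v y ∂μ) (leftFilter b) atTop := by
  have hsub : ∀ {x : ℝ}, (x : EReal) < b → Ioo r x ⊆ {y : ℝ | r < y ∧ (y : EReal) < b} :=
    fun hxb y hy => ⟨hy.1, (EReal.coe_lt_coe_iff.2 hy.2).trans hxb⟩
  have hunbdd : ∀ M, ∃ x₀ : ℝ, r < x₀ ∧ (x₀ : EReal) < b ∧ M < ∫ y in Ioo r x₀, v y ∂μ := by
    intro M
    by_contra! hM
    obtain ⟨xs, hxs, hxs_lim⟩ := LeftFilter.exists_seq_tendsto hrb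
    have hT : MeasurableSet {y : ℝ | r < y ∧ (y : EReal) < b} :=
      measurableSet_Ioi.inter (measurable_coe_real_ereal measurableSet_Iio)
    have hcover : AECover (μ.restrict {y : ℝ | r < y ∧ (y : EReal) < b}) atTop
        fun n => Ioo r (xs n) := by
      refine ⟨?_, fun n => measurableSet_Ioo⟩
      filter_upwards [ae_restrict_mem hT] with y ⟨hry, hyb⟩
      filter_upwards [hxs_lim.eventually (LeftFilter.eventually_lt_and_lt hyb)] with n hn
      exact ⟨hry, hn.1⟩
    refine hinf (hcover.integrable_of_integral_bounded_of_nonneg_ae M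
      (fun n => (hv _ (hxs n).1 (hxs n).2).restrict) hv0 (Eventually.of_forall fun n => ?_))
    rw [Measure.restrict_restrict_of_subset (hsub (hxs n).2)]
    exact hM _ (hxs n).1 (hxs n).2
  refine tendsto_atTop.2 fun M => ?_
  obtain ⟨x₀, hrx₀, hx₀b, hM⟩ := hunbdd M
  filter_upwards [LeftFilter.eventually_lt_and_lt hx₀b] with x ⟨hx₀x, hxb⟩
  exact hM.le.trans (setIntegral_mono_set (hv x (hrx₀.trans hx₀x) hxb)
    (ae_restrict_of_ae_restrict_of_subset (hsub hxb) hv0)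
    (Ioo_subset_Ioo_right hx₀x.le).eventuallyLE)

theorem tendsto_setIntegral_div_of_nonneg {u v w : ℝ → ℝ} {A : EReal} (hrb : (r : EReal) < b)
    (hu : ∀ x : ℝ, r < x → (x : EReal) < b → IntegrableOn u (Ioo r x) μ)
    (hv : ∀ x : ℝ, r < x → (x : EReal) < b → IntegrableOn v (Ioo r x) μ)
    (hv0 : ∀ᵐ y ∂μ.restrict {y : ℝ | r < y ∧ (y : EReal) < b}, 0 ≤ v y)
    (huvw : ∀ᵐ y ∂μ.restrict {y : ℝ | r < y ∧ (y : EReal) < b}, u y = w y * v y)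
    (hwlim : Tendsto (fun x => ((w x : ℝ) : EReal)) (leftFilter b) (𝓝 A))
    (hinf : ¬ IntegrableOn v {y : ℝ | r < y ∧ (y : EReal) < b} μ) :
    Tendsto (fun x => (((∫ y in Ioo r x, u y ∂μ) / (∫ y in Ioo r x, v y ∂μ) : ℝ) : EReal))
      (leftFilter b) (𝓝 A) := by
  have hdiff : ∀ m : ℝ, ∀ x : ℝ, r < x → (x : EReal) < b →
      IntegrableOn (fun y => u y - m * v y) (Ioo r x) μ ∧
        ∫ y in Ioo r x, (u y - m * v y) ∂μ =
          (∫ y in Ioo r x, u y ∂μ) - m * ∫ y in Ioo r x, v y ∂μ := fun m x hrx hxb =>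
    ⟨(hu x hrx hxb).sub ((hv x hrx hxb).const_mul m), by
      rw [integral_sub (hu x hrx hxb) ((hv x hrx hxb).const_mul m), integral_const_mul]⟩
  refine tendsto_div_of_affine_bounds (tendsto_setIntegral_Ioo_atTop hrb hv hv0 hinf)
    (fun m hm => ?_) (fun m hm => ?_)
  · obtain ⟨K, hK⟩ := exists_eventually_le_setIntegral_Ioo hrb
      (fun x hrx hxb => (hdiff m x hrx hxb).1) ((tendsto_order.1 hwlim).1 m hm) (by
        filter_upwards [hv0, huvw] with y hy0 hy hmw
        rw [hy]
        nlinarith [EReal.coe_lt_coe_iff.1 hmw])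
    refine ⟨K, ?_⟩
    filter_upwards [hK, LeftFilter.eventually_lt_and_lt hrb] with x hx ⟨hrx, hxb⟩
    linarith [(hdiff m x hrx hxb).2]
  · obtain ⟨K, hK⟩ := exists_eventually_le_setIntegral_Ioo hrb
      (f := fun y => -(u y - m * v y)) (fun x hrx hxb => (hdiff m x hrx hxb).1.fun_neg)
      ((tendsto_order.1 hwlim).2 m hm) (by
        filter_upwards [hv0, huvw] with y hy0 hy hwm
        rw [hy]
        nlinarith [EReal.coe_lt_coe_iff.1 hwm])
    refine ⟨-K, ?_⟩
    filter_upwards [hK, LeftFilter.eventually_lt_and_lt hrb] with x hx ⟨hrx, hxb⟩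
    rw [integral_neg] at hx
    linarith [(hdiff m x hrx hxb).2]

end SetIntegralIoo

theorem stmt19_general (a b : EReal) (u v w : ℝ → ℝ) (A : EReal)
    (μ : Measure ℝ)
    (hu : ∀ s t : ℝ, MemI a b s → MemI a b t → IntegrableOn u (Ioo s t) μ)
    (hv : ∀ s t : ℝ, MemI a b s → MemI a b t → IntegrableOn v (Ioo s t) μ)
    (hsign : (∀ᵐ x ∂(μ.restrict {x : ℝ | MemI a b x}), 0 < v x) ∨
             (∀ᵐ x ∂(μ.restrict {x : ℝ | MemI a b x}), v x < 0))
    (hw : ∀ᵐ x ∂(μ.restrict {x : ℝ | MemI a b x}), w x = u x / v x)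
    (hwlim : Tendsto (fun x : ℝ => ((w x : ℝ) : EReal)) (leftFilter b) (𝓝 A))
    (r : ℝ) (hr : MemI a b r)
    (hinf : ¬ IntegrableOn v {x : ℝ | r < x ∧ (x : EReal) < b} μ) :
    Tendsto (fun x : ℝ =>
        (((∫ y in Ioo r x, u y ∂μ) / (∫ y in Ioo r x, v y ∂μ) : ℝ) : EReal))
      (leftFilter b) (𝓝 A) := by
  have hsub : {x : ℝ | r < x ∧ (x : EReal) < b} ⊆ {x | MemI a b x} := fun x hx =>
    ⟨hr.1.trans (EReal.coe_lt_coe_iff.2 hx.1), hx.2⟩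
  have hloc : ∀ f : ℝ → ℝ, (∀ s t : ℝ, MemI a b s → MemI a b t → IntegrableOn f (Ioo s t) μ) →
      ∀ x : ℝ, r < x → (x : EReal) < b → IntegrableOn f (Ioo r x) μ :=
    fun f hf x hrx hxb => hf r x hr (hsub ⟨hrx, hxb⟩)
  have hw' := ae_restrict_of_ae_restrict_of_subset hsub hw
  rcases hsign with hpos | hneg
  · have hpos' := ae_restrict_of_ae_restrict_of_subset hsub hpos
    refine tendsto_setIntegral_div_of_nonneg hr.2 (hloc u hu) (hloc v hv)
      (hpos'.mono fun x hx => hx.le) ?_ hwlim hinf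
    filter_upwards [hpos', hw'] with x hx hwx
    rw [hwx, div_mul_cancel₀ _ hx.ne']
  · have hneg' := ae_restrict_of_ae_restrict_of_subset hsub hneg
    have huvw : ∀ᵐ x ∂μ.restrict {x : ℝ | r < x ∧ (x : EReal) < b}, -u x = w x * -v x := by
      filter_upwards [hneg', hw'] with x hx hwx
      rw [hwx, mul_neg, div_mul_cancel₀ _ hx.ne]
    simpa only [integral_neg, neg_div_neg_eq] using
      tendsto_setIntegral_div_of_nonneg (u := fun x => -u x) (v := fun x => -v x) hr.2
        (hloc _ fun s t hs ht => (hu s t hs ht).neg) (hloc _ fun s t hs ht => (hv s t hs ht).neg)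
        (hneg'.mono fun x hx => by linarith) huvw hwlim (fun h => hinf (integrable_neg_iff.1 h))

/-- L'Hospital's rule via Lebesgue–Stieltjes integrals, `∞` case. -/
theorem stmt19 (a b : EReal) (hab : a < b) (α u v w : ℝ → ℝ) (A : EReal)
    (μ : Measure ℝ)
    (hα : StrictMonoOn α {x : ℝ | MemI a b x})
    (hμ : ∀ s t : ℝ, MemI a b s → MemI a b t → s < t →
      μ (Ioo s t) = ENNReal.ofReal (leftLim α t - rightLim α s))
    (hu : ∀ s t : ℝ, MemI a b s → MemI a b t → IntegrableOn u (Ioo s t) μ)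
    (hv : ∀ s t : ℝ, MemI a b s → MemI a b t → IntegrableOn v (Ioo s t) μ)
    (hsign : (∀ᵐ x ∂(μ.restrict {x : ℝ | MemI a b x}), 0 < v x) ∨
             (∀ᵐ x ∂(μ.restrict {x : ℝ | MemI a b x}), v x < 0))
    (hw : ∀ᵐ x ∂(μ.restrict {x : ℝ | MemI a b x}), w x = u x / v x)
    (hwlim : Tendsto (fun x : ℝ => ((w x : ℝ) : EReal)) (leftFilter b) (𝓝 A))
    (r : ℝ) (hr : MemI a b r)
    (hinf : ¬ IntegrableOn v {x : ℝ | r < x ∧ (x : EReal) < b} μ) :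
    Tendsto (fun x : ℝ =>
        (((∫ y in Ioo r x, u y ∂μ) / (∫ y in Ioo r x, v y ∂μ) : ℝ) : EReal))
      (leftFilter b) (𝓝 A) :=
  stmt19_general a b u v w A μ hu hv hsign hw hwlim r hr hinf
end
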